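/- Let X be a GC_3 set and let ℓ be a 3-node line of X. Then |X_ℓ| = 3 if and only if there exists a maximal line M₀ of X such that no node of X lies on both M₀ and ℓ. In this case X_ℓ = X \ (ℓ ∪ M₀), X_ℓ is a GC_1 set, and every maximal line M ≠ M₀ of X intersects ℓ at a node of X and satisfies |M ∩ X_ℓ| = 2. -/

import Mathlib

/-!
Degree-one polynomials are prime, so a node `A` uses `ℓ` exactly when `ℓ` is one of the three
lines of its fundamental polynomial; the other two lines then carry all nodes off `ℓ` except `A`.

If two nodes `A ≠ B` use `ℓ` and every maximal line meets `ℓ` at a node, then no line carries four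
of the seven nodes off `ℓ`, so the six of them other than `A` split into two collinear triples,
and likewise for `B`. The triple of `A` not containing `B` shares two points with a triple of `B`,
so they span the same line; then `B`'s other triple shares two points with `A`'s triple through
`B`, which puts `B` on a line of its own triples.

Conversely, if a maximal line `M₀` misses `ℓ ∩ X`, the three nodes of `X \ (ℓ ∪ M₀)` are not
collinear, since otherwise `ℓ M₀ L` would vanish on `X`. Each of them has the fundamental
polynomial `ℓ M₀ L'` with `L'` the line through the other two, so it uses `ℓ`, while a node of `M₀`
cannot use `ℓ`: the two other lines of its fundamental polynomial meet `M₀` in at most two of its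
three remaining nodes. Another maximal line `M` meets `ℓ`, `M₀` and the non-collinear triple in at
most `1 + 1 + 2` nodes, so all these bounds are attained.
-/

open MvPolynomial

/-- Points of the plane `ℝ²`. -/
abbrev Pt : Type := Fin 2 → ℝ

/-- Bivariate real polynomials. -/
abbrev BPoly : Type := MvPolynomial (Fin 2) ℝ

/-- `X` is an `n`-poised node set: it has `N = (n+1)(n+2)/2` nodes and every
interpolation problem with polynomials of total degree at most `n` has a unique solution. -/
def IsPoised (n : ℕ) (X : Set Pt) : Prop :=
  X.ncard = (n + 1) * (n + 2) / 2 ∧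
  ∀ c : Pt → ℝ, ∃! p : BPoly, p.totalDegree ≤ n ∧ ∀ A ∈ X, eval A p = c A

/-- `p` is an `n`-fundamental polynomial of the node `A` for the node set `X`. -/
def IsFund (n : ℕ) (X : Set Pt) (A : Pt) (p : BPoly) : Prop :=
  p.totalDegree ≤ n ∧ eval A p = 1 ∧ ∀ B ∈ X, B ≠ A → eval B p = 0

/-- `X` is a `GC_n` set: it is `n`-poised and each node has a fundamental polynomial
that is a product of `n` polynomials of degree `1`. -/
def IsGC (n : ℕ) (X : Set Pt) : Prop :=
  IsPoised n X ∧
  ∀ A ∈ X, ∃ p : BPoly, IsFund n X A p ∧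
    ∃ f : Fin n → BPoly, (∀ i, (f i).totalDegree = 1) ∧ p = ∏ i, f i

/-- A line is the zero set of a polynomial of degree exactly `1`. -/
def IsLine (L : Set Pt) : Prop :=
  ∃ f : BPoly, f.totalDegree = 1 ∧ L = {x : Pt | eval x f = 0}

/-- A `k`-node line of `X`: a line passing through exactly `k` nodes of `X`. -/
def IsNodeLine (k : ℕ) (X : Set Pt) (L : Set Pt) : Prop :=
  IsLine L ∧ (X ∩ L).ncard = k

/-- A maximal line of an `n`-poised set `X`: an `(n+1)`-node line. -/
def IsMaxLine (n : ℕ) (X : Set Pt) (L : Set Pt) : Prop :=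
  IsNodeLine (n + 1) X L

/-- The node `A` uses the line `L`: a degree-1 polynomial whose zero set is `L`
divides the `n`-fundamental polynomial of `A` with respect to `X`. -/
def Uses (n : ℕ) (X : Set Pt) (L : Set Pt) (A : Pt) : Prop :=
  ∃ p f : BPoly, IsFund n X A p ∧ f.totalDegree = 1 ∧ L = {x : Pt | eval x f = 0} ∧ f ∣ p

/-- `X_ℓ`: the set of nodes of `X` that use the line `L`. -/
def UseSet (n : ℕ) (X : Set Pt) (L : Set Pt) : Set Pt :=
  {A ∈ X | Uses n X L A}

def zeroSet (f : BPoly) : Set Pt := {x | eval x f = 0}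

@[simp] lemma mem_zeroSet {f : BPoly} {x : Pt} : x ∈ zeroSet f ↔ eval x f = 0 := Iff.rfl

open Finsupp in
lemma eval_eq_of_totalDegree_le_one {p : BPoly} (hp : p.totalDegree ≤ 1) (z : Pt) :
    eval z p = coeff 0 p + coeff (single 0 1) p * z 0 + coeff (single 1 1) p * z 1 := by
  have hsupp : p.support ⊆ {0, single 0 1, single 1 1} := by
    intro d hd
    have h := (le_totalDegree hd).trans hp
    rw [Finsupp.sum_fintype _ _ fun _ => rfl, Fin.sum_univ_two] at h
    simp only [Finset.mem_insert, Finset.mem_singleton, Finsupp.ext_iff, Fin.forall_fin_two,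
      Finsupp.coe_zero, Pi.zero_apply, single_eq_same, ne_eq, one_ne_zero, not_false_eq_true,
      single_eq_of_ne, zero_ne_one]
    omega
  conv_lhs => rw [p.as_sum, map_sum, Finset.sum_subset hsupp fun d _ hd => by
    rw [MvPolynomial.notMem_support_iff.1 hd, monomial_zero, map_zero]]
  rw [Finset.sum_insert (by simp [Finsupp.ext_iff]), Finset.sum_insert (by simp [Finsupp.ext_iff]),
    Finset.sum_singleton]
  simp only [monomial_zero', eval_C, Fin.isValue, eval_monomial, pow_zero, prod_single_index,
    pow_one]
  ring

lemma ne_zero_of_totalDegree_eq_one {f : BPoly} (hf : f.totalDegree = 1) : f ≠ 0 := by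
  rintro rfl
  simp at hf

lemma sub_ne_zero_or_sub_ne_zero_of_ne {x y : Pt} (hxy : x ≠ y) :
    y 0 - x 0 ≠ 0 ∨ y 1 - x 1 ≠ 0 := by
  by_contra! h
  exact hxy (funext (Fin.forall_fin_two.2 ⟨by linarith [h.1], by linarith [h.2]⟩))

lemma coeff_single_ne_zero_of_totalDegree_eq_one {f : BPoly} (hf : f.totalDegree = 1) :
    coeff (Finsupp.single 0 1) f ≠ 0 ∨ coeff (Finsupp.single 1 1) f ≠ 0 := by
  by_contra! h
  have : f = C (coeff 0 f) := MvPolynomial.funext fun z => by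
    simp [eval_eq_of_totalDegree_le_one hf.le, h]
  rw [this, totalDegree_C] at hf
  exact zero_ne_one hf

lemma eval_eq_zero_iff_collinear {f : BPoly} (hf : f.totalDegree = 1) {x y : Pt}
    (hxy : x ≠ y) (hx : eval x f = 0) (hy : eval y f = 0) (z : Pt) :
    eval z f = 0 ↔ (y 0 - x 0) * (z 1 - x 1) = (y 1 - x 1) * (z 0 - x 0) := by
  have hbc := coeff_single_ne_zero_of_totalDegree_eq_one hf
  have huv := sub_ne_zero_or_sub_ne_zero_of_ne hxy
  rw [eval_eq_of_totalDegree_le_one hf.le] at hx hy ⊢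
  set b := coeff (Finsupp.single 0 1) f
  set c := coeff (Finsupp.single 1 1) f
  constructor
  · intro hz
    rcases hbc with hb | hc
    · refine mul_left_cancel₀ hb ?_
      linear_combination (z 1 - x 1) * (hy - hx) - (y 1 - x 1) * (hz - hx)
    · refine mul_left_cancel₀ hc ?_
      linear_combination (y 0 - x 0) * (hz - hx) - (z 0 - x 0) * (hy - hx)
  · intro hz
    rcases huv with hu | hv
    · refine mul_left_cancel₀ hu ?_
      linear_combination (y 0 - x 0) * hx + c * hz + (z 0 - x 0) * (hy - hx)
    · refine mul_left_cancel₀ hv ?_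
      linear_combination (y 1 - x 1) * hx - b * hz + (z 1 - x 1) * (hy - hx)

lemma totalDegree_affine {a b c : ℝ} (hbc : b ≠ 0 ∨ c ≠ 0) :
    (C a + C b * X 0 + C c * X 1 : BPoly).totalDegree = 1 := by
  refine le_antisymm ?_ ?_
  · refine (totalDegree_add _ _).trans (max_le ((totalDegree_add _ _).trans (max_le ?_ ?_)) ?_)
    · simp
    all_goals exact (totalDegree_mul _ _).trans (by simp [totalDegree_X])
  · rcases hbc with hb | hc
    · refine le_trans (by simp) (le_totalDegree (s := Finsupp.single 0 1) ?_)
      simp [coeff_X, coeff_C, Finsupp.ext_iff, hb]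
    · refine le_trans (by simp) (le_totalDegree (s := Finsupp.single 1 1) ?_)
      simp [coeff_X, coeff_C, Finsupp.ext_iff, hc]

lemma exists_line_through {x y : Pt} (hxy : x ≠ y) :
    ∃ f : BPoly, f.totalDegree = 1 ∧ eval x f = 0 ∧ eval y f = 0 := by
  have huv := (sub_ne_zero_or_sub_ne_zero_of_ne hxy).symm.imp_left neg_ne_zero.2
  exact ⟨_, totalDegree_affine (a := (y 1 - x 1) * x 0 - (y 0 - x 0) * x 1) huv,
    by simp only [map_add, map_mul, eval_C, eval_X]; ring,
    by simp only [map_add, map_mul, eval_C, eval_X]; ring⟩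

lemma prime_of_totalDegree_eq_one {f : BPoly} (hf : f.totalDegree = 1) : Prime f :=
  (irreducible_of_totalDegree_eq_one hf fun r hr => isUnit_iff_ne_zero.2 fun hr0 =>
    ne_zero_of_totalDegree_eq_one hf <| by ext d; simpa [hr0] using hr d).prime

lemma zeroSet_eq_of_dvd {f g : BPoly} (hf : f.totalDegree = 1) (hg : g.totalDegree = 1)
    (hfg : f ∣ g) : zeroSet g = zeroSet f := by
  obtain ⟨c, rfl⟩ := hfg
  have hc : c ≠ 0 := right_ne_zero_of_mul (ne_zero_of_totalDegree_eq_one hg)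
  have hc0 : c.totalDegree = 0 := by
    rw [totalDegree_mul_of_isDomain (ne_zero_of_totalDegree_eq_one hf) hc, hf] at hg
    omega
  rw [totalDegree_eq_zero_iff_eq_C] at hc0
  rw [hc0, Ne, C_eq_zero] at hc
  ext z
  rw [hc0]
  simp [hc]

lemma Set.Subsingleton.ncard_le_one {α : Type*} {s : Set α} (hs : s.Subsingleton) :
    s.ncard ≤ 1 :=
  (Set.ncard_le_one hs.finite).2 fun _ ha _ hb => hs ha hb

namespace IsLine
variable {L M : Set Pt}

lemma eq_of_mem_of_mem (hL : IsLine L) (hM : IsLine M) {x y : Pt} (hxy : x ≠ y) (hxL : x ∈ L)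
    (hyL : y ∈ L) (hxM : x ∈ M) (hyM : y ∈ M) : L = M := by
  obtain ⟨f, hf, rfl⟩ := hL
  obtain ⟨g, hg, rfl⟩ := hM
  ext z
  exact (eval_eq_zero_iff_collinear hf hxy hxL hyL z).trans
    (eval_eq_zero_iff_collinear hg hxy hxM hyM z).symm

lemma subsingleton_inter (hL : IsLine L) (hM : IsLine M) (hLM : L ≠ M) : (L ∩ M).Subsingleton :=
  fun _ hx _ hy => by_contra fun hxy => hLM (hL.eq_of_mem_of_mem hM hxy hx.1 hy.1 hx.2 hy.2)

lemma eq_of_subset_inter (hL : IsLine L) (hM : IsLine M) {T : Set Pt} (hT : T ⊆ L ∩ M)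
    (h2 : 1 < T.ncard) : L = M := by
  obtain ⟨x, hx⟩ := Set.nonempty_of_ncard_ne_zero (by omega : T.ncard ≠ 0)
  obtain ⟨y, hy, hyx⟩ := Set.exists_ne_of_one_lt_ncard h2 x
  exact hL.eq_of_mem_of_mem hM (Ne.symm hyx) (hT hx).1 (hT hy).1 (hT hx).2 (hT hy).2

lemma ncard_le_of_subset_iUnion {ι : Type*} [Fintype ι] (hL : IsLine L) {M : ι → Set Pt}
    (hM : ∀ i, IsLine (M i)) (hML : ∀ i, M i ≠ L) {T : Set Pt} (hTL : T ⊆ L)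
    (hTM : T ⊆ ⋃ i, M i) : T.ncard ≤ Fintype.card ι := by
  have hsub : ∀ i, (M i ∩ L).Subsingleton := fun i => (hM i).subsingleton_inter hL (hML i)
  calc T.ncard ≤ (⋃ i, M i ∩ L).ncard := by
        refine Set.ncard_le_ncard (fun x hx => ?_) (Set.finite_iUnion fun i => (hsub i).finite)
        obtain ⟨i, hi⟩ := Set.mem_iUnion.1 (hTM hx)
        exact Set.mem_iUnion.2 ⟨i, hi, hTL hx⟩
    _ ≤ ∑ i, (M i ∩ L).ncard := Set.ncard_iUnion_le_of_fintype _
    _ ≤ ∑ _i : ι, 1 := Finset.sum_le_sum fun i _ => (hsub i).ncard_le_one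
    _ = Fintype.card ι := by simp

lemma eq_or_eq_of_subset_union (hL : IsLine L) {M₁ M₂ : Set Pt} (hM₁ : IsLine M₁)
    (hM₂ : IsLine M₂) {T : Set Pt} (hTL : T ⊆ L) (hTM : T ⊆ M₁ ∪ M₂) (hT : 2 < T.ncard) :
    M₁ = L ∨ M₂ = L := by
  by_contra! h
  have := hL.ncard_le_of_subset_iUnion (M := fun b => cond b M₁ M₂) (by simp [hM₁, hM₂])
    (by simp [h.1, h.2]) hTL (Set.union_eq_iUnion ▸ hTM)
  rw [Fintype.card_bool] at this
  omega

end IsLine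

def IsDetermining (k : ℕ) (Y : Set Pt) : Prop :=
  ∀ p : BPoly, p.totalDegree ≤ k → (∀ B ∈ Y, eval B p = 0) → p = 0

lemma IsDetermining.sdiff_line {k : ℕ} {Y L : Set Pt} (hY : IsDetermining (k + 1) Y)
    (hL : IsLine L) : IsDetermining k (Y \ L) := by
  intro p hp hvan
  obtain ⟨f, hf, rfl⟩ := hL
  have hfp : f * p = 0 := hY _ ((totalDegree_mul _ _).trans (by omega)) fun B hB => by
    by_cases hBf : eval B f = 0
    · simp [hBf]
    · simp [hvan B ⟨hB, hBf⟩]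
  exact (mul_eq_zero.1 hfp).resolve_left (ne_zero_of_totalDegree_eq_one hf)

lemma IsDetermining.not_subset_line {Y L : Set Pt} (hY : IsDetermining 1 Y) (hL : IsLine L) :
    ¬ Y ⊆ L := by
  obtain ⟨f, hf, rfl⟩ := hL
  exact fun hYL => ne_zero_of_totalDegree_eq_one hf (hY f hf.le fun B hB => hYL hB)

section Fundamental
variable {n : ℕ} {X : Set Pt} {A : Pt} {p : BPoly}

lemma IsFund.eval_eq (hp : IsFund n X A p) {B : Pt} (hB : B ∈ X) :
    eval B p = if B = A then 1 else 0 := by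
  split_ifs with hBA
  · exact hBA ▸ hp.2.1
  · exact hp.2.2 B hB hBA

lemma IsFund.mul_line {k : ℕ} {Y : Set Pt} {q f : BPoly} (hq : IsFund k (Y \ zeroSet f) A q)
    (hf : f.totalDegree = 1) (hA : eval A f ≠ 0) :
    IsFund (k + 1) Y A (C (eval A f)⁻¹ * f * q) := by
  refine ⟨?_, by simp [hq.2.1, hA], fun B hB hBA => ?_⟩
  · calc _ ≤ (C (eval A f)⁻¹ * f).totalDegree + q.totalDegree := totalDegree_mul _ _
      _ ≤ (0 + 1) + k := add_le_add ((totalDegree_mul _ _).trans (by rw [totalDegree_C, hf])) hq.1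
      _ = k + 1 := by ring
  · by_cases hBf : eval B f = 0
    · simp [hBf]
    · simp [hq.2.2 B ⟨hB, hBf⟩ hBA]

lemma IsFund.uses_of_sdiff {k : ℕ} {Y L : Set Pt} {q : BPoly} (hq : IsFund k (Y \ L) A q)
    (hL : IsLine L) (hA : A ∉ L) : Uses (k + 1) Y L A := by
  obtain ⟨f, hf, rfl⟩ := hL
  exact ⟨_, f, hq.mul_line hf hA, hf, rfl, ⟨C (eval A f)⁻¹ * q, by ring⟩⟩

lemma IsFund.prod_cover {g : Fin n → BPoly} (hp : IsFund n X A (∏ i, g i)) :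
    (∀ i, A ∉ zeroSet (g i)) ∧ X \ {A} ⊆ ⋃ i, zeroSet (g i) := by
  refine ⟨fun i hi => ?_, fun B hB => ?_⟩
  · have h1 := hp.2.1
    rw [map_prod, Finset.prod_eq_zero (Finset.mem_univ i) (show eval A (g i) = 0 from hi)] at h1
    exact zero_ne_one h1
  · have h0 := hp.2.2 B hB.1 hB.2
    rw [map_prod, Finset.prod_eq_zero_iff] at h0
    obtain ⟨i, -, hi⟩ := h0
    exact Set.mem_iUnion.2 ⟨i, hi⟩

lemma Uses.notMem {L : Set Pt} (hu : Uses n X L A) : A ∉ L := by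
  obtain ⟨p, f, hp, -, rfl, r, rfl⟩ := hu
  intro hA
  simpa [show eval A f = 0 from hA] using hp.2.1

end Fundamental

lemma finite_of_ncard_eq {n : ℕ} {X : Set Pt} (hX : X.ncard = (n + 1) * (n + 2) / 2) :
    X.Finite :=
  Set.finite_of_ncard_ne_zero <| by
    rw [hX]
    exact (Nat.div_pos (by nlinarith) two_pos).ne'

namespace IsPoised
variable {n : ℕ} {X : Set Pt}

lemma isDetermining (hX : IsPoised n X) : IsDetermining n X := fun p hp hvan =>
  (hX.2 fun _ => 0).unique ⟨hp, hvan⟩ ⟨by simp, by simp⟩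

lemma eq_of_isFund (hX : IsPoised n X) {A : Pt} {p q : BPoly} (hp : IsFund n X A p)
    (hq : IsFund n X A q) : p = q :=
  (hX.2 fun B => if B = A then 1 else 0).unique ⟨hp.1, fun _ hB => hp.eval_eq hB⟩
    ⟨hq.1, fun _ hB => hq.eval_eq hB⟩

lemma exists_isFund (hX : IsPoised n X) {A : Pt} (hA : A ∈ X) : ∃ p, IsFund n X A p := by
  obtain ⟨p, ⟨hp, hev⟩, -⟩ := hX.2 fun B => if B = A then 1 else 0
  exact ⟨p, hp, by simpa using hev A hA, fun B hB hBA => by simpa [hBA] using hev B hB⟩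

lemma isGC_one (hX : IsPoised 1 X) : IsGC 1 X := by
  refine ⟨hX, fun A hA => ?_⟩
  obtain ⟨p, hp⟩ := hX.exists_isFund hA
  obtain ⟨B, hB, hBA⟩ := Set.exists_ne_of_one_lt_ncard (by rw [hX.1]; norm_num) A
  have hdeg : p.totalDegree = 1 := by
    refine le_antisymm hp.1 (Nat.one_le_iff_ne_zero.2 fun h0 => ?_)
    have h1 := hp.2.1
    have h2 := hp.2.2 B hB hBA
    rw [totalDegree_eq_zero_iff_eq_C.1 h0, eval_C] at h1 h2
    exact one_ne_zero (h1.symm.trans h2)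
  exact ⟨p, hp, fun _ => p, fun _ => hdeg, by simp⟩

end IsPoised

lemma isPoised_of_forall_isFund {n : ℕ} {X : Set Pt} (hcard : X.ncard = (n + 1) * (n + 2) / 2)
    (hfund : ∀ A ∈ X, ∃ p, IsFund n X A p) (hdet : IsDetermining n X) : IsPoised n X := by
  refine ⟨hcard, fun c => ?_⟩
  have hX := finite_of_ncard_eq hcard
  choose! P hP using hfund
  set p := ∑ A ∈ hX.toFinset, C (c A) * P A
  have hev : ∀ B ∈ X, eval B p = c B := fun B hB => by
    rw [map_sum, Finset.sum_eq_single B (fun A hA hAB => by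
      simp [(hP A (by simpa using hA)).2.2 B hB (Ne.symm hAB)]) (by simp [hB])]
    simp [(hP B hB).2.1]
  have hdeg : p.totalDegree ≤ n := totalDegree_finsetSum_le fun A hA =>
    (totalDegree_mul _ _).trans (by simpa using (hP A (by simpa using hA)).1)
  exact ⟨p, ⟨hdeg, hev⟩, fun q hq => sub_eq_zero.1 <|
    hdet _ ((totalDegree_sub _ _).trans (max_le hq.1 hdeg)) fun B hB => by
      simp [hq.2 B hB, hev B hB]⟩

lemma isPoised_one_of_ncard_eq_three {R : Set Pt} (h3 : R.ncard = 3) (hdet : IsDetermining 1 R) :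
    IsPoised 1 R := by
  refine isPoised_of_forall_isFund (by rw [h3]) (fun A hA => ?_) hdet
  obtain ⟨Q, Q', hQQ', hR⟩ :=
    Set.ncard_eq_two.1 (show (R \ {A}).ncard = 2 by rw [Set.ncard_sdiff_singleton_of_mem hA, h3])
  obtain ⟨g, hg, hgQ, hgQ'⟩ := exists_line_through hQQ'
  have hcov : ∀ B ∈ R, B ≠ A → eval B g = 0 := fun B hB hBA => by
    have hB' : B ∈ R \ {A} := ⟨hB, hBA⟩
    rw [hR] at hB'
    rcases hB' with rfl | rfl
    exacts [hgQ, hgQ']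
  have hgA : eval A g ≠ 0 := fun hgA => ne_zero_of_totalDegree_eq_one hg <|
    hdet g hg.le fun B hB => if hBA : B = A then hBA ▸ hgA else hcov B hB hBA
  exact ⟨_, IsFund.mul_line (k := 0) (q := 1) ⟨by simp, by simp,
    fun B hB hBA => absurd (hcov B hB.1 hBA) hB.2⟩ hg hgA⟩

namespace IsGC
variable {n : ℕ} {X : Set Pt} {A : Pt}

lemma exists_cover (hX : IsGC n X) (hA : A ∈ X) :
    ∃ L : Fin n → Set Pt, (∀ i, IsLine (L i) ∧ A ∉ L i) ∧ X \ {A} ⊆ ⋃ i, L i := by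
  obtain ⟨p, hp, g, hg, rfl⟩ := hX.2 A hA
  obtain ⟨hA', hcov⟩ := hp.prod_cover
  exact ⟨fun i => zeroSet (g i), fun i => ⟨⟨g i, hg i, rfl⟩, hA' i⟩, hcov⟩

lemma exists_cover_of_uses (hX : IsGC (n + 1) X) (hA : A ∈ X) {ℓ : Set Pt}
    (hu : Uses (n + 1) X ℓ A) :
    ∃ L : Fin n → Set Pt, (∀ i, IsLine (L i) ∧ A ∉ L i) ∧ X \ {A} ⊆ ℓ ∪ ⋃ i, L i := by
  obtain ⟨q, hq, g, hg, rfl⟩ := hX.2 A hA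
  obtain ⟨p, f, hp, hf, rfl, hfp⟩ := hu
  rw [hX.1.eq_of_isFund hp hq] at hfp
  obtain ⟨j, -, hj⟩ := (prime_of_totalDegree_eq_one hf).exists_mem_finset_dvd hfp
  obtain ⟨hA', hcov⟩ := hq.prod_cover
  refine ⟨fun i => zeroSet (g (j.succAbove i)), fun i => ⟨⟨_, hg _, rfl⟩, hA' _⟩,
    fun B hB => ?_⟩
  obtain ⟨i, hi⟩ := Set.mem_iUnion.1 (hcov hB)
  rcases eq_or_ne i j with rfl | hij
  · exact Or.inl (show B ∈ zeroSet f from zeroSet_eq_of_dvd hf (hg i) hj ▸ hi)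
  · obtain ⟨k, rfl⟩ := Fin.exists_succAbove_eq hij
    exact Or.inr (Set.mem_iUnion.2 ⟨k, hi⟩)

lemma ncard_inter_le (hX : IsGC n X) {L : Set Pt} (hL : IsLine L) : (X ∩ L).ncard ≤ n + 1 := by
  rcases (X ∩ L).eq_empty_or_nonempty with h | ⟨A, hAX, hAL⟩
  · simp [h]
  obtain ⟨M, hM, hcov⟩ := hX.exists_cover hAX
  have := hL.ncard_le_of_subset_iUnion (fun i => (hM i).1) (fun i h => (hM i).2 (h ▸ hAL))
    (T := (X ∩ L) \ {A}) (fun B hB => hB.1.2) (fun B hB => hcov ⟨hB.1.1, hB.2⟩)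
  rw [Set.ncard_sdiff_singleton_of_mem (Set.mem_inter hAX hAL), Fintype.card_fin] at this
  omega

/-- The other lines of the fundamental polynomial of `A` cover at most `n` of the `n + 1` other
nodes of `M`. -/
lemma inter_nonempty_of_uses {M ℓ : Set Pt} (hX : IsGC (n + 1) X) (hM : IsMaxLine (n + 1) X M)
    (hA : A ∈ X ∩ M) (hu : Uses (n + 1) X ℓ A) : (M ∩ ℓ ∩ X).Nonempty := by
  by_contra! hMℓ
  obtain ⟨L, hL, hcov⟩ := hX.exists_cover_of_uses hA.1 hu
  have := hM.1.ncard_le_of_subset_iUnion (fun i => (hL i).1) (fun i h => (hL i).2 (h ▸ hA.2))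
    (T := (X ∩ M) \ {A}) (fun B hB => hB.1.2) fun B hB =>
      (hcov ⟨hB.1.1, hB.2⟩).resolve_left fun hBℓ => hMℓ.subset ⟨⟨hB.1.2, hBℓ⟩, hB.1.1⟩
  rw [Set.ncard_sdiff_singleton_of_mem hA, hM.2, Fintype.card_fin] at this
  omega

end IsGC

section SevenPoints
variable {S : Set Pt}

lemma inter_eq_sdiff_of_subset_union (hS : S.ncard = 7)
    (h3 : ∀ L, IsLine L → (S ∩ L).ncard ≤ 3) {A : Pt} (hA : A ∈ S) {L₁ L₂ : Set Pt}
    (hL₁ : IsLine L₁) (hL₂ : IsLine L₂) (hcov : S \ {A} ⊆ L₁ ∪ L₂) :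
    S ∩ L₂ = S \ insert A L₁ ∧ (S ∩ L₂).ncard = 3 := by
  have : Finite S := (Set.finite_of_ncard_ne_zero (by omega)).to_subtype
  have h6 : (S \ {A}).ncard = 6 := by rw [Set.ncard_sdiff_singleton_of_mem hA, hS]
  have h₁ := h3 L₁ hL₁
  have h₂ := h3 L₂ hL₂
  have hsum : 6 ≤ (S ∩ L₁).ncard + (S ∩ L₂).ncard := by
    calc 6 = (S \ {A}).ncard := h6.symm
      _ ≤ (S ∩ L₁ ∪ S ∩ L₂).ncard := Set.ncard_le_ncard fun y hy =>
          (hcov hy).imp (⟨hy.1, ·⟩) (⟨hy.1, ·⟩)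
      _ ≤ _ := Set.ncard_union_le _ _
  have hsub : S ∩ L₂ ⊆ S \ insert A L₁ := by
    refine fun x hx => ⟨hx.1, fun hxA => ?_⟩
    have hcov' : S \ {A} ⊆ S ∩ L₁ ∪ (S ∩ L₂) \ {x} := fun y hy => by
      rcases hcov hy with hy₁ | hy₂
      · exact Or.inl ⟨hy.1, hy₁⟩
      · by_cases hyx : y = x
        · subst hyx
          exact Or.inl ⟨hy.1, (Set.mem_insert_iff.1 hxA).resolve_left hy.2⟩
        · exact Or.inr ⟨⟨hy.1, hy₂⟩, hyx⟩
    have := (Set.ncard_le_ncard hcov').trans (Set.ncard_union_le _ _)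
    rw [Set.ncard_sdiff_singleton_of_mem hx] at this
    omega
  refine ⟨hsub.antisymm fun x hx => ?_, by omega⟩
  exact ⟨hx.1, (hcov ⟨hx.1, fun h => hx.2 (Or.inl h)⟩).resolve_left fun h => hx.2 (Or.inr h)⟩

lemma subsingleton_setOf_subset_union (hS : S.ncard = 7)
    (h3 : ∀ L, IsLine L → (S ∩ L).ncard ≤ 3) :
    {P ∈ S | ∃ L₁ L₂, IsLine L₁ ∧ IsLine L₂ ∧ S \ {P} ⊆ L₁ ∪ L₂}.Subsingleton := by
  rintro A ⟨hA, L₁, L₂, hL₁, hL₂, hcovA⟩ B ⟨hB, M₁, M₂, hM₁, hM₂, hcovB⟩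
  by_contra hAB
  wlog hBL₁ : B ∈ L₁ generalizing L₁ L₂
  · exact this L₂ L₁ hL₂ hL₁ (Set.union_comm L₁ L₂ ▸ hcovA)
      ((hcovA ⟨hB, Ne.symm hAB⟩).resolve_left hBL₁)
  obtain ⟨hL₂eq, hL₂3⟩ := inter_eq_sdiff_of_subset_union hS h3 hA hL₁ hL₂ hcovA
  obtain ⟨hL₁eq, hL₁3⟩ :=
    inter_eq_sdiff_of_subset_union hS h3 hA hL₂ hL₁ (Set.union_comm L₁ L₂ ▸ hcovA)
  have hL₂M : M₁ = L₂ ∨ M₂ = L₂ := by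
    refine hL₂.eq_or_eq_of_subset_union hM₁ hM₂ Set.inter_subset_right
      (fun x hx => hcovB ⟨hx.1, fun hxB => ?_⟩) (by omega)
    rw [hL₂eq] at hx
    exact hx.2 (Or.inr (hxB ▸ hBL₁))
  obtain ⟨M, hM, hcovB'⟩ : ∃ M, IsLine M ∧ S \ {B} ⊆ L₂ ∪ M := by
    rcases hL₂M with h | h
    · exact ⟨M₂, hM₂, h ▸ hcovB⟩
    · exact ⟨M₁, hM₁, h ▸ Set.union_comm M₁ M₂ ▸ hcovB⟩
  obtain ⟨hMeq, -⟩ := inter_eq_sdiff_of_subset_union hS h3 hB hL₂ hM hcovB'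
  have hL₁M : L₁ = M := by
    refine hL₁.eq_of_subset_inter hM (T := (S ∩ L₁) \ {B}) (fun z hz => ⟨hz.1.2, ?_⟩)
      (by rw [Set.ncard_sdiff_singleton_of_mem (Set.mem_inter hB hBL₁), hL₁3]; norm_num)
    have hzL₂ : z ∉ L₂ := fun h => (hL₁eq ▸ hz.1 : z ∈ S \ insert A L₂).2 (Or.inr h)
    have : z ∈ S ∩ M := hMeq ▸ ⟨hz.1.1, fun h => h.elim hz.2 hzL₂⟩
    exact this.2
  have : B ∈ S ∩ M := ⟨hB, hL₁M ▸ hBL₁⟩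
  rw [hMeq] at this
  exact this.2 (Or.inl rfl)

end SevenPoints

section GC3
variable {X ℓ M₀ : Set Pt}

lemma IsGC.ncard_sdiff_inter_le_three (hX : IsGC 3 X)
    (hmeet : ∀ M, IsMaxLine 3 X M → (M ∩ ℓ ∩ X).Nonempty) {L : Set Pt} (hL : IsLine L) :
    (X \ ℓ ∩ L).ncard ≤ 3 := by
  by_contra! h4
  have hXL := hX.ncard_inter_le hL
  have hSL : X \ ℓ ∩ L = X ∩ L := Set.eq_of_subset_of_ncard_le (fun x hx => ⟨hx.1.1, hx.2⟩)
    (by omega) ((finite_of_ncard_eq hX.1.1).inter_of_left _)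
  obtain ⟨z, ⟨hzL, hzℓ⟩, hzX⟩ := hmeet L ⟨hL, le_antisymm hXL (hSL ▸ h4)⟩
  exact (hSL ▸ ⟨hzX, hzL⟩ : z ∈ X \ ℓ ∩ L).1.2 hzℓ

lemma IsGC.exists_maxLine_of_one_lt_ncard_useSet (hX : IsGC 3 X) (hℓ : IsNodeLine 3 X ℓ)
    (h2 : 1 < (UseSet 3 X ℓ).ncard) : ∃ M₀, IsMaxLine 3 X M₀ ∧ M₀ ∩ ℓ ∩ X = ∅ := by
  by_contra! hmeet
  have hS : (X \ ℓ).ncard = 7 := by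
    have := Set.ncard_inter_add_ncard_sdiff_eq_ncard X ℓ (finite_of_ncard_eq hX.1.1)
    rw [hℓ.2, hX.1.1] at this
    omega
  have hsub : UseSet 3 X ℓ ⊆
      {P ∈ X \ ℓ | ∃ L₁ L₂, IsLine L₁ ∧ IsLine L₂ ∧ (X \ ℓ) \ {P} ⊆ L₁ ∪ L₂} := by
    rintro P ⟨hPX, hu⟩
    obtain ⟨L, hL, hcov⟩ := hX.exists_cover_of_uses hPX hu
    refine ⟨⟨hPX, hu.notMem⟩, L 0, L 1, (hL 0).1, (hL 1).1, fun B hB => ?_⟩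
    rcases hcov ⟨hB.1.1, hB.2⟩ with hBℓ | hBL
    · exact absurd hBℓ hB.1.2
    · simpa [Fin.exists_fin_two] using hBL
  have := ((subsingleton_setOf_subset_union hS
    fun L hL => hX.ncard_sdiff_inter_le_three hmeet hL).anti hsub).ncard_le_one
  omega

lemma ncard_sdiff_union_eq_three (hX : IsPoised 3 X) (hℓ : IsNodeLine 3 X ℓ)
    (hM₀ : IsMaxLine 3 X M₀) (hdisj : M₀ ∩ ℓ ∩ X = ∅) : (X \ (ℓ ∪ M₀)).ncard = 3 := by
  have hfin := finite_of_ncard_eq hX.1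
  have h₁ := Set.ncard_inter_add_ncard_sdiff_eq_ncard X ℓ hfin
  have h₂ := Set.ncard_inter_add_ncard_sdiff_eq_ncard (X \ ℓ) M₀ hfin.sdiff
  have hM₀' : X \ ℓ ∩ M₀ = X ∩ M₀ := by
    refine (Set.inter_subset_inter_left _ Set.sdiff_subset).antisymm fun z hz => ⟨⟨hz.1, ?_⟩, hz.2⟩
    exact fun hzℓ => hdisj.subset ⟨⟨hz.2, hzℓ⟩, hz.1⟩
  rw [hM₀', Set.sdiff_sdiff, hM₀.2] at h₂
  rw [hℓ.2, hX.1] at h₁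
  omega

lemma isPoised_one_sdiff_union (hX : IsPoised 3 X) (hℓ : IsNodeLine 3 X ℓ)
    (hM₀ : IsMaxLine 3 X M₀) (hdisj : M₀ ∩ ℓ ∩ X = ∅) : IsPoised 1 (X \ (ℓ ∪ M₀)) := by
  refine isPoised_one_of_ncard_eq_three (ncard_sdiff_union_eq_three hX hℓ hM₀ hdisj) ?_
  rw [← Set.sdiff_sdiff]
  exact (hX.isDetermining.sdiff_line hℓ.1).sdiff_line hM₀.1

lemma useSet_eq_sdiff_union (hX : IsGC 3 X) (hℓ : IsNodeLine 3 X ℓ) (hM₀ : IsMaxLine 3 X M₀)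
    (hdisj : M₀ ∩ ℓ ∩ X = ∅) : UseSet 3 X ℓ = X \ (ℓ ∪ M₀) := by
  ext P
  refine ⟨fun ⟨hPX, hu⟩ => ⟨hPX, ?_⟩, fun hP => ⟨hP.1, ?_⟩⟩
  · rintro (hPℓ | hPM₀)
    · exact hu.notMem hPℓ
    · exact (hX.inter_nonempty_of_uses hM₀ ⟨hPX, hPM₀⟩ hu).ne_empty hdisj
  · obtain ⟨q, hq⟩ := (isPoised_one_sdiff_union hX.1 hℓ hM₀ hdisj).exists_isFund hP
    rw [← Set.sdiff_sdiff] at hq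
    obtain ⟨f, hf, rfl⟩ := hM₀.1
    exact (hq.mul_line hf (hP.2 ∘ Or.inr)).uses_of_sdiff hℓ.1 (hP.2 ∘ Or.inl)

lemma inter_nonempty_and_ncard_inter_sdiff_union_eq_two (hX : IsPoised 3 X)
    (hℓ : IsNodeLine 3 X ℓ) (hM₀ : IsMaxLine 3 X M₀) (hdisj : M₀ ∩ ℓ ∩ X = ∅) {M : Set Pt}
    (hM : IsMaxLine 3 X M) (hne : M ≠ M₀) :
    (M ∩ ℓ ∩ X).Nonempty ∧ (M ∩ (X \ (ℓ ∪ M₀))).ncard = 2 := by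
  have hR3 := ncard_sdiff_union_eq_three hX hℓ hM₀ hdisj
  have hRfin : (X \ (ℓ ∪ M₀)).Finite := Set.finite_of_ncard_ne_zero (by omega)
  have hle : (M ∩ (X \ (ℓ ∪ M₀))).ncard ≤ 2 := by
    by_contra! h
    have hMR : M ∩ (X \ (ℓ ∪ M₀)) = X \ (ℓ ∪ M₀) :=
      Set.eq_of_subset_of_ncard_le Set.inter_subset_right (by omega) hRfin
    refine (isPoised_one_sdiff_union hX hℓ hM₀ hdisj).isDetermining.not_subset_line hM.1 ?_
    exact hMR ▸ Set.inter_subset_left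
  have hMℓ : M ≠ ℓ := fun h => by
    have := hM.2
    rw [h, hℓ.2] at this
    omega
  have hMℓX := (hM.1.subsingleton_inter hℓ.1 hMℓ).anti (Set.inter_subset_left (t := X))
  have hMM₀ := hM.1.subsingleton_inter hM₀.1 hne
  have hcov : X ∩ M ⊆ M ∩ ℓ ∩ X ∪ M ∩ M₀ ∪ M ∩ (X \ (ℓ ∪ M₀)) := fun z hz => by
    by_cases hzℓ : z ∈ ℓ
    · exact Or.inl (Or.inl ⟨⟨hz.2, hzℓ⟩, hz.1⟩)
    by_cases hzM₀ : z ∈ M₀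
    · exact Or.inl (Or.inr ⟨hz.2, hzM₀⟩)
    exact Or.inr ⟨hz.2, hz.1, fun h => h.elim hzℓ hzM₀⟩
  have := (Set.ncard_le_ncard hcov ((hMℓX.finite.union hMM₀.finite).union
    (hRfin.inter_of_right M))).trans ((Set.ncard_union_le _ _).trans
    (Nat.add_le_add_right (Set.ncard_union_le _ _) _))
  have := hMℓX.ncard_le_one
  have := hMM₀.ncard_le_one
  have := hM.2
  exact ⟨Set.nonempty_of_ncard_ne_zero (by omega), by omega⟩

end GC3

/-- For a `GC_3` set `X` and a `3`-node line `ℓ`: `|X_ℓ| = 3` iff there is a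
maximal line `M₀` with `M₀ ∩ ℓ ∩ X = ∅`; in this case `X_ℓ = X \ (ℓ ∪ M₀)` is a `GC_1` set,
and every other maximal line `M` meets `ℓ` at a node and satisfies `|M ∩ X_ℓ| = 2`. -/
theorem GC3_useSet_card_eq_three_iff (X ℓ : Set Pt) (hX : IsGC 3 X)
    (hℓ : IsNodeLine 3 X ℓ) :
    ((UseSet 3 X ℓ).ncard = 3 ↔
      ∃ M₀ : Set Pt, IsMaxLine 3 X M₀ ∧ M₀ ∩ ℓ ∩ X = ∅) ∧
    ((UseSet 3 X ℓ).ncard = 3 →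
      ∃ M₀ : Set Pt, IsMaxLine 3 X M₀ ∧ M₀ ∩ ℓ ∩ X = ∅ ∧
        UseSet 3 X ℓ = X \ (ℓ ∪ M₀) ∧ IsGC 1 (UseSet 3 X ℓ) ∧
        ∀ M : Set Pt, IsMaxLine 3 X M → M ≠ M₀ →
          (M ∩ ℓ ∩ X).Nonempty ∧ (M ∩ UseSet 3 X ℓ).ncard = 2) := by
  have hiff : (UseSet 3 X ℓ).ncard = 3 ↔ ∃ M₀, IsMaxLine 3 X M₀ ∧ M₀ ∩ ℓ ∩ X = ∅ := by
    refine ⟨fun h3 => hX.exists_maxLine_of_one_lt_ncard_useSet hℓ (by omega), ?_⟩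
    rintro ⟨M₀, hM₀, hdisj⟩
    rw [useSet_eq_sdiff_union hX hℓ hM₀ hdisj]
    exact ncard_sdiff_union_eq_three hX.1 hℓ hM₀ hdisj
  refine ⟨hiff, fun h3 => ?_⟩
  obtain ⟨M₀, hM₀, hdisj⟩ := hiff.1 h3
  rw [useSet_eq_sdiff_union hX hℓ hM₀ hdisj]
  exact ⟨M₀, hM₀, hdisj, rfl, (isPoised_one_sdiff_union hX.1 hℓ hM₀ hdisj).isGC_one,
    fun M hM hne =>
      inter_nonempty_and_ncard_inter_sdiff_union_eq_two hX.1 hℓ hM₀ hdisj hM hne⟩
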